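/- arXiv:0906.4648 — 3 statements merged into one kernel-verified Lean document; each statement's English description precedes it below -/
import Mathlib

section
/- Let φ, ψ : ℝ/ℤ → ℝ be Morse measuring functions on the circle. If the infimum, over all homeomorphisms f : ℝ/ℤ → ℝ/ℤ, of sup_{x ∈ ℝ/ℤ} |φ(x) − ψ(f(x))| equals 0 (i.e. the natural pseudo-distance between (ℝ/ℤ, φ) and (ℝ/ℤ, ψ) vanishes), then there exists an optimal homeomorphism, i.e. a homeomorphism f : ℝ/ℤ → ℝ/ℤ such that ψ(f(x)) = φ(x) for every x ∈ ℝ/ℤ. -/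
/-!
Choose homeomorphisms `fₙ` with `sup |φ - ψ ∘ fₙ| < 1/(n+1)` and lift them to increasing
degree-one bijections `Fₙ : ℝ → ℝ`, after replacing `ψ` by `ψ ∘ (-·)` if the `fₙ` reverse
orientation along the chosen ultrafilter. Along it the `Fₙ` and their inverses converge pointwise
to monotone degree-one maps `A` and `B` with `ψ ∘ A = φ` and `φ ∘ B = ψ` on `ℝ`. A Morse function
is nowhere locally constant, so `A` is constant on no interval, i.e. strictly monotone; the same
holds for `B`, and since `B` is a one-sided inverse of `A`, `A` has no jumps. Hence `A` is an
increasing bijection commuting with `· + 1`, and it descends to the required homeomorphism of the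
circle.
-/

open Filter Topology Set Function

local notation "𝕊" => AddCircle (1 : ℝ)

theorem not_eventuallyConst_of_deriv_ne_zero_or {g : ℝ → ℝ}
    (hg : ∀ t, deriv g t ≠ 0 ∨ deriv (deriv g) t ≠ 0) (t : ℝ) : ¬ EventuallyConst g (𝓝 t) := by
  intro hconst
  obtain ⟨c, hc⟩ := eventuallyConst_iff_exists_eventuallyEq.mp hconst
  have hderiv : deriv g =ᶠ[𝓝 t] fun _ => 0 :=
    hc.eventuallyEq_nhds.mono fun s hs => by rw [hs.deriv_eq, deriv_const]
  rcases hg t with h | h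
  · exact h hderiv.eq_of_nhds
  · exact h (by rw [hderiv.deriv_eq, deriv_const])

theorem Monotone.strictMono_of_not_eventuallyConst {α β γ : Type*} [TopologicalSpace α]
    [LinearOrder α] [OrderTopology α] [DenselyOrdered α] [PartialOrder β] {A : α → β}
    (hA : Monotone A) {g : α → γ} {k : β → γ} (hgk : ∀ t, g t = k (A t))
    (hg : ∀ t, ¬ EventuallyConst g (𝓝 t)) : StrictMono A := by
  intro a b hab
  refine (hA hab.le).lt_of_ne fun hAab => ?_
  obtain ⟨m, ham, hmb⟩ := exists_between hab
  refine hg m ((EventuallyConst.const (k (A a))).congr ?_)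
  filter_upwards [Ioo_mem_nhds ham hmb] with t ht
  rw [hgk, le_antisymm (hAab ▸ hA ht.2.le) (hA ht.1.le)]

theorem surjective_of_strictMono_of_lt_imp_le {α β : Type*} [LinearOrder α] [LinearOrder β]
    [DenselyOrdered β] {A : α → β} {B : β → α} (hB : StrictMono B)
    (hAB : ∀ s t, A s < t → s ≤ B t) (hBA : ∀ s t, t < A s → B t ≤ s) : Surjective A := by
  intro y
  refine ⟨B y, ?_⟩
  rcases lt_trichotomy (A (B y)) y with hlt | heq | hgt
  · obtain ⟨u, hAu, huy⟩ := exists_between hlt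
    exact absurd (hAB _ _ hAu) (hB huy).not_ge
  · exact heq
  · obtain ⟨u, hyu, huA⟩ := exists_between hgt
    exact absurd (hBA _ _ huA) (hB hyu).not_ge

theorem eq_of_tendsto_of_abs_sub_le {ι : Type*} {l : Filter ι} [l.NeBot] {y ε : ι → ℝ} {b c : ℝ}
    (hy : Tendsto y l (𝓝 b)) (hε : Tendsto ε l (𝓝 0)) (h : ∀ᶠ i in l, |c - y i| ≤ ε i) :
    b = c := by
  refine tendsto_nhds_unique hy (tendsto_iff_dist_tendsto_zero.mpr ?_)
  refine squeeze_zero' (.of_forall fun i => dist_nonneg) (h.mono fun i hi => ?_) hε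
  rwa [Real.dist_eq, abs_sub_comm]

theorem exists_homeomorph_abs_sub_lt_of_iInf_eq_zero {X Y : Type*} [TopologicalSpace X]
    [CompactSpace X] [TopologicalSpace Y] [Nonempty (X ≃ₜ Y)] {φ : X → ℝ} {ψ : Y → ℝ}
    (hφ : Continuous φ) (hψ : Continuous ψ) (hdist : (⨅ f : X ≃ₜ Y, ⨆ x, |φ x - ψ (f x)|) = 0)
    {ε : ℝ} (hε : 0 < ε) : ∃ f : X ≃ₜ Y, ∀ x, |φ x - ψ (f x)| < ε := by
  obtain ⟨f, hf⟩ := exists_lt_of_ciInf_lt (hdist.trans_lt hε)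
  have hbdd := (isCompact_range (hφ.sub (hψ.comp f.continuous)).abs).bddAbove
  exact ⟨f, fun x => (le_ciSup hbdd x).trans_lt hf⟩

namespace AddCircle

theorem exists_int_eq_add_of_coe_eq {L₁ L₂ : ℝ → ℝ} (h₁ : Continuous L₁) (h₂ : Continuous L₂)
    (h : ∀ t, (L₁ t : 𝕊) = L₂ t) : ∃ m : ℤ, ∀ t, L₁ t = L₂ t + m := by
  have hzero : ∀ t, ((L₁ t - L₂ t : ℝ) : 𝕊) = 0 := fun t => by rw [coe_sub, h, sub_self]
  have hconst := (isCoveringMap_coe (1 : ℝ)).const_of_comp (h₁.sub h₂)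
    fun a a' => (hzero a).trans (hzero a').symm
  obtain ⟨m, hm⟩ := (coe_eq_zero_iff (p := (1 : ℝ))).mp (hzero 0)
  refine ⟨m, fun t => ?_⟩
  have := hconst t 0
  simp only [zsmul_eq_mul, mul_one] at hm
  simp only [Pi.sub_apply] at this
  linarith

theorem exists_lift {u : 𝕊 → 𝕊} (hu : Continuous u) :
    ∃ L : ℝ → ℝ, Continuous L ∧ L 0 ∈ Ico (0 : ℝ) 1 ∧ ∀ t, (L t : 𝕊) = u t := by
  obtain ⟨L, ⟨hL0, hL⟩, -⟩ := (isCoveringMap_coe (1 : ℝ)).existsUnique_continuousMap_lifts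
    ⟨fun t : ℝ => u t, hu.comp (AddCircle.continuous_mk' 1)⟩ 0 (equivIco 1 0 (u 0))
    ((equivIco 1 0).symm_apply_apply (u 0))
  refine ⟨L, L.continuous, ?_, fun t => congrFun hL t⟩
  simpa [hL0] using (equivIco 1 0 (u 0)).2

theorem bijective_of_lift (f : 𝕊 ≃ₜ 𝕊) {L : ℝ → ℝ} (hL : Continuous L)
    (hLf : ∀ t, (L t : 𝕊) = f t) : Bijective L := by
  obtain ⟨M, hM, -, hMf⟩ := exists_lift f.symm.continuous
  obtain ⟨k, hk⟩ := exists_int_eq_add_of_coe_eq (hL.comp hM) continuous_id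
    fun t => by simp [hLf, hMf]
  obtain ⟨k', hk'⟩ := exists_int_eq_add_of_coe_eq (hM.comp hL) continuous_id
    fun t => by simp [hLf, hMf]
  refine ⟨fun s t hst => ?_, fun t => ⟨M (t - k), ?_⟩⟩
  · have hs := hk' s
    have ht := hk' t
    simp only [comp_apply, id, hst] at hs ht
    linarith
  · simpa using hk (t - k)

theorem map_add_one_of_strictMono_lift (g : 𝕊 ≃ₜ 𝕊) {F : ℝ → ℝ} (hc : Continuous F)
    (hmono : StrictMono F) (hsurj : Surjective F) (hFg : ∀ t, (F t : 𝕊) = g t) (t : ℝ) :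
    F (t + 1) = F t + 1 := by
  obtain ⟨m, hm⟩ := exists_int_eq_add_of_coe_eq (hc.comp (continuous_add_const 1)) hc
    fun t => by rw [comp_apply, hFg, hFg, coe_add_period]
  have hF1 : F 1 = F 0 + m := by simpa using hm 0
  -- for `m ≥ 2` some `s ∈ (0, 1)` has `F s = F 0 + 1`, so `g` identifies the images of `s` and `0`
  suffices m = 1 by simpa [this] using hm t
  have hpos : (0 : ℝ) < m := by linarith [hmono zero_lt_one]
  by_contra hm1
  have htwo : (2 : ℝ) ≤ m := by
    have : (0 : ℤ) < m := by exact_mod_cast hpos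
    exact_mod_cast (show 2 ≤ m by omega)
  obtain ⟨s, hs⟩ := hsurj (F 0 + 1)
  have hs0 : 0 < s := hmono.lt_iff_lt.mp (by linarith)
  have hs1 : s < 1 := hmono.lt_iff_lt.mp (by linarith)
  have hcoe : (s : 𝕊) = (0 : ℝ) := by
    apply g.injective
    rw [← hFg, ← hFg, hs, coe_add_period]
  have := (coe_eq_coe_iff_of_mem_Ico (p := 1) (a := 0) ⟨hs0.le, by simpa using hs1⟩
    ⟨le_rfl, by simp⟩).mp hcoe
  linarith

end AddCircle

namespace CircleDeg1Lift

theorem exists_units_coe_eq (g : 𝕊 ≃ₜ 𝕊) {F : ℝ → ℝ} (hc : Continuous F) (hmono : StrictMono F)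
    (hsurj : Surjective F) (hFg : ∀ t, (F t : 𝕊) = g t) : ∃ G : CircleDeg1Liftˣ, ⇑G = F := by
  let G : CircleDeg1Lift :=
    ⟨⟨F, hmono.monotone⟩, AddCircle.map_add_one_of_strictMono_lift g hc hmono hsurj hFg⟩
  exact ⟨(isUnit_iff_bijective.mpr (⟨hmono.injective, hsurj⟩ : Bijective G)).unit, rfl⟩

theorem exists_units_lift (f : 𝕊 ≃ₜ 𝕊) :
    ∃ F : CircleDeg1Liftˣ, F 0 ∈ Icc (-1 : ℝ) 1 ∧
      ((∀ t, (F t : 𝕊) = f t) ∨ ∀ t, (F t : 𝕊) = -f t) := by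
  obtain ⟨L, hL, hL0, hLf⟩ := AddCircle.exists_lift f.continuous
  have hbij := AddCircle.bijective_of_lift f hL hLf
  rcases hL.strictMono_of_inj hbij.1 with hmono | hanti
  · obtain ⟨F, hF⟩ := exists_units_coe_eq f hL hmono hbij.2 hLf
    exact ⟨F, by simp only [hF]; constructor <;> linarith [hL0.1, hL0.2], .inl (hF ▸ hLf)⟩
  · have hnegf : ∀ t, ((-L t : ℝ) : 𝕊) = f.trans (Homeomorph.neg 𝕊) t := fun t => by
      simp [hLf]
    obtain ⟨F, hF⟩ := exists_units_coe_eq _ hL.neg (fun a b hab => neg_lt_neg (hanti hab))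
      (neg_surjective.comp hbij.2) hnegf
    refine ⟨F, by simp only [hF, Pi.neg_apply]; constructor <;> linarith [hL0.1, hL0.2],
      .inr fun t => ?_⟩
    simpa [hF] using hnegf t

theorem exists_tendsto {ι : Type*} (𝒰 : Ultrafilter ι) (F : ι → CircleDeg1Lift)
    (hF : ∀ᶠ i in 𝒰, F i 0 ∈ Icc (-1 : ℝ) 1) :
    ∃ A : CircleDeg1Lift, ∀ t, Tendsto (fun i => F i t) 𝒰 (𝓝 (A t)) := by
  have hlim : ∀ t, ∃ a, Tendsto (fun i => F i t) 𝒰 (𝓝 a) := by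
    intro t
    have hmem : ∀ᶠ i in 𝒰, F i t ∈ Icc (⌊t⌋ - 1 : ℝ) (⌈t⌉ + 1) := hF.mono fun i hi =>
      ⟨by linarith [(F i).le_map_of_map_zero t, hi.1],
        by linarith [(F i).map_le_of_map_zero t, hi.2]⟩
    obtain ⟨a, -, ha⟩ := isCompact_Icc.ultrafilter_le_nhds (𝒰.map fun i => F i t)
      (le_principal_iff.mpr hmem)
    exact ⟨a, ha⟩
  choose a ha using hlim
  refine ⟨⟨⟨a, fun s t hst => le_of_tendsto_of_tendsto' (ha s) (ha t) fun i => (F i).monotone hst⟩,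
    fun t => tendsto_nhds_unique (ha (t + 1)) ?_⟩, ha⟩
  simpa only [map_add_one] using (ha t).add_const 1

theorem units_inv_map_zero_mem_Icc (F : CircleDeg1Liftˣ) (h : F 0 ∈ Icc (-1 : ℝ) 1) :
    (F⁻¹ : CircleDeg1Liftˣ) 0 ∈ Icc (-1 : ℝ) 1 := by
  have hG := units_inv_apply_apply F 0
  have hle : (F⁻¹ : CircleDeg1Liftˣ) (-1) ≤ (F⁻¹ : CircleDeg1Liftˣ) (F 0) :=
    (F⁻¹ : CircleDeg1Liftˣ).1.monotone h.1
  have hge : (F⁻¹ : CircleDeg1Liftˣ) (F 0) ≤ (F⁻¹ : CircleDeg1Liftˣ) 1 :=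
    (F⁻¹ : CircleDeg1Liftˣ).1.monotone h.2
  have h1 := map_int_of_map_zero (F⁻¹ : CircleDeg1Liftˣ).1 1
  have h2 := map_int_of_map_zero (F⁻¹ : CircleDeg1Liftˣ).1 (-1)
  push_cast at h1 h2
  constructor <;> linarith

theorem le_and_le_of_tendsto_units {ι : Type*} {l : Filter ι} [l.NeBot] (F : ι → CircleDeg1Liftˣ)
    {s t a b : ℝ} (ha : Tendsto (fun i => F i s) l (𝓝 a))
    (hb : Tendsto (fun i => (F i)⁻¹ t) l (𝓝 b)) : (a < t → s ≤ b) ∧ (t < a → b ≤ s) := by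
  constructor
  · intro hat
    refine ge_of_tendsto hb ((ha.eventually_lt_const hat).mono fun i hi => ?_)
    simpa using ((toOrderIso (F i)).lt_symm_apply.mpr hi).le
  · intro hta
    refine le_of_tendsto hb ((ha.eventually_const_lt hta).mono fun i hi => ?_)
    simpa using ((toOrderIso (F i)).symm_apply_lt.mpr hi).le

def addCircleMap (f : CircleDeg1Lift) : 𝕊 → 𝕊 :=
  Quotient.map' f fun x y hxy => by
    rw [QuotientAddGroup.leftRel_apply, AddSubgroup.mem_zmultiples_iff] at hxy ⊢
    obtain ⟨k, hk⟩ := hxy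
    refine ⟨k, ?_⟩
    rw [show y = x + k by simp at hk; linarith, f.map_add_int]
    simp

theorem addCircleMap_coe (f : CircleDeg1Lift) (t : ℝ) : f.addCircleMap t = f t := rfl

theorem continuous_addCircleMap {f : CircleDeg1Lift} (hf : Continuous f) :
    Continuous f.addCircleMap :=
  (QuotientAddGroup.isQuotientMap_mk _).continuous_iff.mpr ((AddCircle.continuous_mk' 1).comp hf)

def unitsToAddCircleHomeomorph (f : CircleDeg1Liftˣ) : 𝕊 ≃ₜ 𝕊 where
  toFun := addCircleMap f
  invFun := addCircleMap ↑f⁻¹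
  left_inv x := by
    induction x using QuotientAddGroup.induction_on
    simp only [addCircleMap_coe]
    rw [units_inv_apply_apply]
  right_inv x := by
    induction x using QuotientAddGroup.induction_on
    simp only [addCircleMap_coe]
    rw [units_apply_inv_apply]
  continuous_toFun := continuous_addCircleMap <|
    (continuous_iff_surjective _).mpr (isUnit_iff_bijective.mp f.isUnit).2
  continuous_invFun := continuous_addCircleMap <|
    (continuous_iff_surjective _).mpr (isUnit_iff_bijective.mp f⁻¹.isUnit).2

end CircleDeg1Lift

theorem exists_homeomorph_comp_eq_of_uniform_approx {ι : Type*} {φ ψ : 𝕊 → ℝ}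
    (hφ : Continuous φ) (hψ : Continuous ψ)
    (hφ' : ∀ t : ℝ, ¬ EventuallyConst (fun s : ℝ => φ s) (𝓝 t))
    (hψ' : ∀ t : ℝ, ¬ EventuallyConst (fun s : ℝ => ψ s) (𝓝 t))
    {l : Filter ι} [l.NeBot] (F : ι → CircleDeg1Liftˣ) {ε : ι → ℝ} (hε : Tendsto ε l (𝓝 0))
    (hF0 : ∀ᶠ i in l, F i 0 ∈ Icc (-1 : ℝ) 1)
    (hF : ∀ᶠ i in l, ∀ t : ℝ, |φ t - ψ (F i t)| ≤ ε i) :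
    ∃ h : 𝕊 ≃ₜ 𝕊, ∀ x, ψ (h x) = φ x := by
  let 𝒰 := Ultrafilter.of l
  have h𝒰 : (𝒰 : Filter ι) ≤ l := Ultrafilter.of_le l
  obtain ⟨A, hA⟩ := CircleDeg1Lift.exists_tendsto 𝒰 (fun i => F i) (h𝒰 hF0)
  obtain ⟨B, hB⟩ := CircleDeg1Lift.exists_tendsto 𝒰 (fun i => ↑(F i)⁻¹)
    (h𝒰 (hF0.mono fun i => CircleDeg1Lift.units_inv_map_zero_mem_Icc (F i)))
  have hψA : ∀ t : ℝ, ψ (A t) = φ t := fun t =>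
    eq_of_tendsto_of_abs_sub_le ((hψ.tendsto _).comp ((AddCircle.continuous_mk' 1).tendsto _
      |>.comp (hA t))) (hε.mono_left h𝒰) (h𝒰 (hF.mono fun i hi => hi t))
  have hφB : ∀ t : ℝ, φ (B t) = ψ t := fun t => by
    refine eq_of_tendsto_of_abs_sub_le ((hφ.tendsto _).comp ((AddCircle.continuous_mk' 1).tendsto _
      |>.comp (hB t))) (hε.mono_left h𝒰) (h𝒰 (hF.mono fun i hi => ?_))
    simpa [abs_sub_comm] using hi ((F i)⁻¹ t)
  have hAB := fun s t => (CircleDeg1Lift.le_and_le_of_tendsto_units F (hA s) (hB t)).1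
  have hBA := fun s t => (CircleDeg1Lift.le_and_le_of_tendsto_units F (hA s) (hB t)).2
  have hAmono := A.monotone.strictMono_of_not_eventuallyConst (k := fun u : ℝ => ψ u)
    (fun t => (hψA t).symm) hφ'
  have hBmono := B.monotone.strictMono_of_not_eventuallyConst (k := fun u : ℝ => φ u)
    (fun t => (hφB t).symm) hψ'
  have hAsurj := surjective_of_strictMono_of_lt_imp_le hBmono hAB hBA
  let A' := (CircleDeg1Lift.isUnit_iff_bijective.mpr ⟨hAmono.injective, hAsurj⟩).unit
  refine ⟨CircleDeg1Lift.unitsToAddCircleHomeomorph A', fun x => ?_⟩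
  induction x using QuotientAddGroup.induction_on with
  | H t => exact hψA t

/-- **Main theorem (Theorem `mainthm`).** If `φ, ψ : ℝ/ℤ → ℝ` are Morse measuring
functions on the circle and the natural pseudo-distance between `(ℝ/ℤ, φ)` and
`(ℝ/ℤ, ψ)` vanishes, then an optimal homeomorphism exists, i.e. a homeomorphism
`f` with `ψ (f x) = φ x` for all `x`. -/
theorem optimal_homeomorphism_of_pseudoDist_eq_zero
    (φ ψ : AddCircle (1 : ℝ) → ℝ)
    (hφC : ContDiff ℝ 2 (fun t : ℝ => φ (t : AddCircle (1 : ℝ))))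
    (hφMorse : ∀ t : ℝ, deriv (fun s : ℝ => φ (s : AddCircle (1 : ℝ))) t ≠ 0 ∨
      deriv (deriv (fun s : ℝ => φ (s : AddCircle (1 : ℝ)))) t ≠ 0)
    (hψC : ContDiff ℝ 2 (fun t : ℝ => ψ (t : AddCircle (1 : ℝ))))
    (hψMorse : ∀ t : ℝ, deriv (fun s : ℝ => ψ (s : AddCircle (1 : ℝ))) t ≠ 0 ∨
      deriv (deriv (fun s : ℝ => ψ (s : AddCircle (1 : ℝ)))) t ≠ 0)
    (hdist : (⨅ f : AddCircle (1 : ℝ) ≃ₜ AddCircle (1 : ℝ), ⨆ x, |φ x - ψ (f x)|) = 0) :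
    ∃ f : AddCircle (1 : ℝ) ≃ₜ AddCircle (1 : ℝ), ∀ x, ψ (f x) = φ x := by
  have hquot := QuotientAddGroup.isQuotientMap_mk (AddSubgroup.zmultiples (1 : ℝ))
  have hφ : Continuous φ := hquot.continuous_iff.mpr hφC.continuous
  have hψ : Continuous ψ := hquot.continuous_iff.mpr hψC.continuous
  have hφ' := not_eventuallyConst_of_deriv_ne_zero_or hφMorse
  have hψ' := not_eventuallyConst_of_deriv_ne_zero_or hψMorse
  choose f hf using fun n : ℕ =>
    exists_homeomorph_abs_sub_lt_of_iInf_eq_zero hφ hψ hdist (Nat.one_div_pos_of_nat (n := n))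
  choose F hF0 hF using fun n => CircleDeg1Lift.exists_units_lift (f n)
  let 𝒰 := Ultrafilter.of (atTop : Filter ℕ)
  have hε := (tendsto_one_div_add_atTop_nhds_zero_nat (𝕜 := ℝ)).mono_left (Ultrafilter.of_le atTop)
  rcases Ultrafilter.eventually_or.mp (Eventually.of_forall (f := (𝒰 : Filter ℕ)) hF)
    with hpos | hneg
  · refine exists_homeomorph_comp_eq_of_uniform_approx hφ hψ hφ' hψ' F hε (.of_forall hF0) ?_
    filter_upwards [hpos] with n hn t
    rw [hn]
    exact (hf n t).le
  · have hψneg' : ∀ t : ℝ, ¬ EventuallyConst (fun s : ℝ => ψ (-(s : 𝕊))) (𝓝 t) := fun t hc =>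
      hψ' (-t) ((hc.comp_tendsto (continuous_neg.tendsto' (-t) t (neg_neg t))).congr
        (.of_forall fun s => by simp only [comp_apply, AddCircle.coe_neg, neg_neg]))
    obtain ⟨g, hg⟩ := exists_homeomorph_comp_eq_of_uniform_approx hφ (hψ.comp continuous_neg) hφ'
      hψneg' F hε (.of_forall hF0) (by
        filter_upwards [hneg] with n hn t
        simpa [hn] using (hf n t).le)
    exact ⟨g.trans (Homeomorph.neg _), hg⟩
end

section
/- Let φ, ψ : ℝ/ℤ → ℝ be Morse measuring functions on the circle. Let (f_k) be a sequence of orientation-preserving homeomorphisms of ℝ/ℤ with sup_{x ∈ ℝ/ℤ} |φ(x) − ψ(f_k(x))| → 0 as k → ∞. Let D = π(ℚ) (a countable dense subset of ℝ/ℤ) and suppose g, h : D → ℝ/ℤ are functions such that for every d ∈ D, f_k(d) → g(d) and f_k⁻¹(d) → h(d) as k → ∞. Define the relation ρ = {(d, g(d)) : d ∈ D} ∪ {(h(d), d) : d ∈ D} ⊆ (ℝ/ℤ) × (ℝ/ℤ). Then for every ε > 0 there exists η > 0 such that for all (x, y), (x′, y′) ∈ ρ: if dist(x, x′) < η then dist(y,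 y′) < ε, and if dist(y, y′) < η then dist(x, x′) < ε. -/
/-!
If the `f k` were not eventually uniformly equicontinuous, infinitely many of them would stretch
arcs of vanishing length to arcs of length at least `ε`. Since `ψ ∘ f k` is uniformly close to `φ`
and `φ` is uniformly continuous, the lift of `ψ` would then vary arbitrarily little on intervals of
length `ε`; by periodicity and compactness it would be constant on an open interval, where both of
its first two derivatives vanish, contradicting the Morse condition. The same argument applies to
the inverses `(f k)⁻¹`, which approximate `φ` by `ψ`. Every point of `ρ` is a limit of points on the
graphs of the `f k` (and, swapped, of the `(f k)⁻¹`), so these uniform bounds pass to `ρ`.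
-/

open Filter Topology Set

local notation "𝕊" => AddCircle (1 : ℝ)

namespace AddCircle

variable {p : ℝ}

theorem dist_coe_le_abs_sub (s t : ℝ) : dist (s : AddCircle p) t ≤ |s - t| := by
  rw [dist_eq_norm, ← coe_sub]
  exact QuotientAddGroup.norm_mk_le_norm

theorem exists_coe_eq_abs_sub_eq_dist (u u' : AddCircle p) :
    ∃ s t : ℝ, (s : AddCircle p) = u ∧ (t : AddCircle p) = u' ∧ |s - t| = dist u u' := by
  obtain ⟨s, rfl⟩ := QuotientAddGroup.mk_surjective u
  obtain ⟨t, rfl⟩ := QuotientAddGroup.mk_surjective u'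
  refine ⟨s, t + round (p⁻¹ * (s - t)) * p, ?_, ?_, ?_⟩
  · rfl
  · rw [coe_add, (coe_eq_zero_iff p).2 ⟨round (p⁻¹ * (s - t)), zsmul_eq_mul _ _⟩, add_zero]
  · rw [dist_eq_norm, ← coe_sub, norm_eq, sub_add_eq_sub_sub]

end AddCircle

def IsIncreasingLift (f : 𝕊 → 𝕊) (F : ℝ → ℝ) : Prop :=
  Continuous F ∧ StrictMono F ∧ (∀ t, F (t + 1) = F t + 1) ∧ ∀ t : ℝ, f t = F t

namespace IsIncreasingLift

variable {f : 𝕊 → 𝕊} {F : ℝ → ℝ}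

theorem symm {e : 𝕊 ≃ₜ 𝕊} (hF : IsIncreasingLift e F) : ∃ G, IsIncreasingLift e.symm G := by
  obtain ⟨hc, hm, hp, hl⟩ := hF
  have hsurj : Function.Surjective F :=
    (CircleDeg1Lift.continuous_iff_surjective ⟨⟨F, hm.monotone⟩, hp⟩).mp hc
  let E := hm.orderIsoOfSurjective F hsurj
  have hFE : ∀ t, F (E.symm t) = t := E.apply_symm_apply
  refine ⟨E.symm, E.symm.continuous, E.symm.strictMono, fun t => hm.injective ?_, fun t => ?_⟩
  · rw [hp, hFE, hFE]
  · rw [e.symm_apply_eq, hl, hFE]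

theorem exists_le_sub (hF : IsIncreasingLift f F) (u u' : 𝕊) :
    ∃ a b, a ≤ b ∧ b - a = dist u u' ∧ dist (f u) (f u') ≤ F b - F a := by
  obtain ⟨-, hm, -, hl⟩ := hF
  have dist_le_of_le : ∀ {s t : ℝ}, s ≤ t → dist (f s) (f t) ≤ F t - F s := fun hst => by
    rw [hl, hl, dist_comm, ← abs_of_nonneg (sub_nonneg.2 (hm.monotone hst))]
    exact AddCircle.dist_coe_le_abs_sub _ _
  obtain ⟨s, t, rfl, rfl, hst⟩ := AddCircle.exists_coe_eq_abs_sub_eq_dist u u'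
  rcases le_total s t with h | h
  · exact ⟨s, t, h, by rw [← hst, abs_sub_comm, abs_of_nonneg (sub_nonneg.2 h)], dist_le_of_le h⟩
  · refine ⟨t, s, h, by rw [← hst, abs_of_nonneg (sub_nonneg.2 h)], ?_⟩
    rw [dist_comm]
    exact dist_le_of_le h

theorem exists_abs_sub_le {φ ψ : 𝕊 → ℝ} (hF : IsIncreasingLift f F) {S γ θ ε : ℝ}
    (hS : ∀ x, |φ x - ψ (f x)| ≤ S) (hφ : ∀ x x' : 𝕊, dist x x' < γ → dist (φ x) (φ x') < θ)
    {u u' : 𝕊} (hu : dist u u' < γ) (hfu : ε ≤ dist (f u) (f u')) :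
    ∃ c, ∀ σ ∈ Icc c (c + ε), ∀ τ ∈ Icc c (c + ε), |ψ σ - ψ τ| ≤ 2 * S + θ := by
  obtain ⟨a, b, hab, hba, hgap⟩ := hF.exists_le_sub u u'
  obtain ⟨hc, -, -, hl⟩ := hF
  have approx : ∀ r ∈ Icc (F a) (F a + ε), ∃ s ∈ Icc a b, |ψ r - φ s| ≤ S := fun r hr => by
    obtain ⟨s, hs, rfl⟩ := intermediate_value_Icc hab hc.continuousOn ⟨hr.1, by linarith [hr.2]⟩
    exact ⟨s, hs, by rw [← hl, abs_sub_comm]; exact hS s⟩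
  refine ⟨F a, fun σ hσ τ hτ => ?_⟩
  obtain ⟨s, hs, hσs⟩ := approx σ hσ
  obtain ⟨t, ht, hτt⟩ := approx τ hτ
  have hst : |φ s - φ t| < θ := hφ _ _ <| (AddCircle.dist_coe_le_abs_sub s t).trans_lt <|
    abs_sub_lt_iff.2 ⟨by linarith [hs.2, ht.1], by linarith [hs.1, ht.2]⟩
  calc |ψ σ - ψ τ| ≤ |ψ σ - φ s| + |φ s - φ t| + |φ t - ψ τ| :=
        (abs_sub_le _ (φ t) _).trans (add_le_add_left (abs_sub_le _ _ _) _)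
    _ ≤ 2 * S + θ := by rw [abs_sub_comm (φ t)]; linarith

end IsIncreasingLift

theorem Function.Periodic.exists_forall_Ioo_eq {Ψ : ℝ → ℝ} (hΨ : Function.Periodic Ψ 1) {ε : ℝ}
    (h : ∀ θ > 0, ∃ c, ∀ σ ∈ Icc c (c + ε), ∀ τ ∈ Icc c (c + ε), |Ψ σ - Ψ τ| ≤ θ) :
    ∃ c, ∀ σ ∈ Ioo c (c + ε), ∀ τ ∈ Ioo c (c + ε), Ψ σ = Ψ τ := by
  have h01 : ∀ n : ℕ, ∃ c ∈ Icc (0 : ℝ) 1,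
      ∀ σ ∈ Icc c (c + ε), ∀ τ ∈ Icc c (c + ε), |Ψ σ - Ψ τ| ≤ 1 / (n + 1) := by
    intro n
    obtain ⟨c, hc⟩ := h _ Nat.one_div_pos_of_nat
    -- translating by `⌊c⌋` moves the interval into the compact range `c ∈ [0, 1]`
    have shift : ∀ x ∈ Icc (Int.fract c) (Int.fract c + ε),
        Ψ x = Ψ (x + ⌊c⌋) ∧ x + ⌊c⌋ ∈ Icc c (c + ε) := fun x hx => by
      rw [Int.fract, mem_Icc] at hx
      exact ⟨by simpa using (hΨ.int_mul ⌊c⌋ x).symm, by constructor <;> linarith [hx.1, hx.2]⟩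
    refine ⟨Int.fract c, ⟨Int.fract_nonneg c, (Int.fract_lt_one c).le⟩, fun σ hσ τ hτ => ?_⟩
    rw [(shift σ hσ).1, (shift τ hτ).1]
    exact hc _ (shift σ hσ).2 _ (shift τ hτ).2
  choose c hc hosc using h01
  obtain ⟨c₀, -, ns, hns, hlim⟩ := isCompact_Icc.tendsto_subseq hc
  refine ⟨c₀, fun σ hσ τ hτ => ?_⟩
  have hmem : ∀ x ∈ Ioo c₀ (c₀ + ε), ∀ᶠ j in atTop, x ∈ Icc (c (ns j)) (c (ns j) + ε) := by
    intro x hx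
    have hnhds : Ioo (x - ε) x ∈ 𝓝 c₀ := Ioo_mem_nhds (by linarith [hx.2]) hx.1
    exact (hlim.eventually hnhds).mono fun j hj =>
      ⟨hj.2.le, by linarith [show x - ε < c (ns j) from hj.1]⟩
  have hle : |Ψ σ - Ψ τ| ≤ 0 :=
    ge_of_tendsto (tendsto_one_div_add_atTop_nhds_zero_nat.comp hns.tendsto_atTop) <|
      ((hmem σ hσ).and (hmem τ hτ)).mono fun j hj => hosc _ _ hj.1 _ hj.2
  exact sub_eq_zero.1 (abs_nonpos_iff.1 hle)

theorem deriv_eq_zero_and_deriv_deriv_eq_zero_of_eventuallyEq_const {𝕜 F : Type*}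
    [NontriviallyNormedField 𝕜] [NormedAddCommGroup F] [NormedSpace 𝕜 F] {f : 𝕜 → F} {x : 𝕜}
    {c : F} (h : f =ᶠ[𝓝 x] fun _ => c) : deriv f x = 0 ∧ deriv (deriv f) x = 0 := by
  have h' : deriv f =ᶠ[𝓝 x] fun _ => 0 :=
    h.eventually_nhds.mono fun y hy => by rw [EventuallyEq.deriv_eq hy, deriv_const]
  exact ⟨h'.eq_of_nhds, by rw [h'.deriv_eq, deriv_const]⟩

theorem eventually_dist_lt_of_morse {φ ψ : 𝕊 → ℝ} (hφ : Continuous φ) (hψ : Continuous ψ)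
    (hψMorse : ∀ t : ℝ, deriv (fun s : ℝ => ψ s) t ≠ 0 ∨ deriv (deriv fun s : ℝ => ψ s) t ≠ 0)
    {f : ℕ → 𝕊 ≃ₜ 𝕊} (hf : ∀ k, ∃ F, IsIncreasingLift (f k) F)
    (happrox : Tendsto (fun k => ⨆ x, |φ x - ψ (f k x)|) atTop (𝓝 0)) {ε : ℝ} (hε : 0 < ε) :
    ∃ η > 0, ∀ᶠ k in atTop, ∀ u u' : 𝕊, dist u u' < η → dist (f k u) (f k u') < ε := by
  by_contra! hcon
  have hosc : ∀ θ > 0, ∃ c, ∀ σ ∈ Icc c (c + ε), ∀ τ ∈ Icc c (c + ε), |ψ σ - ψ τ| ≤ θ := by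
    intro θ hθ
    obtain ⟨γ, hγ, hφγ⟩ := Metric.uniformContinuous_iff.1
      (CompactSpace.uniformContinuous_of_continuous hφ) (θ / 3) (by positivity)
    obtain ⟨k, ⟨u, u', hu, hfu⟩, hk⟩ :=
      ((hcon γ hγ).and_eventually (happrox.eventually_lt_const (by positivity : 0 < θ / 3))).exists
    have hS : ∀ x, |φ x - ψ (f k x)| ≤ ⨆ x, |φ x - ψ (f k x)| := le_ciSup <|
      (isCompact_range (by fun_prop : Continuous fun x => |φ x - ψ (f k x)|)).bddAbove
    obtain ⟨F, hF⟩ := hf k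
    obtain ⟨c, hc⟩ := hF.exists_abs_sub_le hS (fun _ _ => @hφγ _ _) hu hfu
    exact ⟨c, fun σ hσ τ hτ => (hc σ hσ τ hτ).trans (by linarith)⟩
  obtain ⟨c, hc⟩ := Function.Periodic.exists_forall_Ioo_eq
    (fun s => congrArg ψ (AddCircle.coe_add_period 1 s)) hosc
  have hmid : c + ε / 2 ∈ Ioo c (c + ε) := ⟨by linarith, by linarith⟩
  obtain ⟨hd, hdd⟩ := deriv_eq_zero_and_deriv_deriv_eq_zero_of_eventuallyEq_const
    (eventually_of_mem (isOpen_Ioo.mem_nhds hmid) fun s hs => hc s hs _ hmid)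
  exact (hψMorse _).elim (· hd) (· hdd)

theorem iSup_abs_sub_comp_symm {X Y : Type*} (e : X ≃ Y) (φ : X → ℝ) (ψ : Y → ℝ) :
    ⨆ y, |ψ y - φ (e.symm y)| = ⨆ x, |φ x - ψ (e x)| := by
  rw [← e.surjective.iSup_comp]
  simp only [Equiv.symm_apply_apply, abs_sub_comm]

section GraphLimit

variable {X Y : Type*}

def IsGraphLimit [TopologicalSpace X] [TopologicalSpace Y] (e : ℕ → X → Y) (p : X × Y) : Prop :=
  ∃ a : ℕ → X, Tendsto a atTop (𝓝 p.1) ∧ Tendsto (fun k => e k (a k)) atTop (𝓝 p.2)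

theorem isGraphLimit_of_tendsto [TopologicalSpace X] [TopologicalSpace Y] {e : ℕ → X → Y}
    {x : X} {y : Y} (h : Tendsto (fun k => e k x) atTop (𝓝 y)) : IsGraphLimit e (x, y) :=
  ⟨fun _ => x, tendsto_const_nhds, h⟩

theorem IsGraphLimit.symm [TopologicalSpace X] [TopologicalSpace Y] {e : ℕ → X ≃ Y}
    {p : X × Y} (hp : IsGraphLimit (fun k => e k) p) :
    IsGraphLimit (fun k => (e k).symm) p.swap := by
  obtain ⟨a, ha, hea⟩ := hp
  exact ⟨fun k => e k (a k), hea, by simpa using ha⟩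

theorem IsGraphLimit.dist_le [PseudoMetricSpace X] [PseudoMetricSpace Y] {e : ℕ → X → Y}
    {η ε : ℝ} (he : ∀ᶠ k in atTop, ∀ x x', dist x x' < η → dist (e k x) (e k x') < ε)
    {p p' : X × Y} (hp : IsGraphLimit e p) (hp' : IsGraphLimit e p') (h : dist p.1 p'.1 < η) :
    dist p.2 p'.2 ≤ ε := by
  obtain ⟨a, ha, hea⟩ := hp
  obtain ⟨a', ha', hea'⟩ := hp'
  refine le_of_tendsto (hea.dist hea') ?_
  filter_upwards [he, (ha.dist ha').eventually_lt_const h] with k hk hk' using (hk _ _ hk').le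

end GraphLimit

theorem rho_uniform_continuity_general
    (φ ψ : AddCircle (1 : ℝ) → ℝ)
    (hφC : ContDiff ℝ 2 (fun t : ℝ => φ (t : AddCircle (1 : ℝ))))
    (hφMorse : ∀ t : ℝ, deriv (fun s : ℝ => φ (s : AddCircle (1 : ℝ))) t ≠ 0 ∨
      deriv (deriv (fun s : ℝ => φ (s : AddCircle (1 : ℝ)))) t ≠ 0)
    (hψC : ContDiff ℝ 2 (fun t : ℝ => ψ (t : AddCircle (1 : ℝ))))
    (hψMorse : ∀ t : ℝ, deriv (fun s : ℝ => ψ (s : AddCircle (1 : ℝ))) t ≠ 0 ∨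
      deriv (deriv (fun s : ℝ => ψ (s : AddCircle (1 : ℝ)))) t ≠ 0)
    (f : ℕ → AddCircle (1 : ℝ) ≃ₜ AddCircle (1 : ℝ))
    (hor : ∀ k : ℕ, ∃ F : ℝ → ℝ, Continuous F ∧ StrictMono F ∧
      (∀ t : ℝ, F (t + 1) = F t + 1) ∧
      ∀ t : ℝ, f k (t : AddCircle (1 : ℝ)) = ((F t : ℝ) : AddCircle (1 : ℝ)))
    (happrox : Tendsto (fun k => ⨆ x, |φ x - ψ (f k x)|) atTop (𝓝 0))
    (D : Set (AddCircle (1 : ℝ)))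
    (g h : AddCircle (1 : ℝ) → AddCircle (1 : ℝ))
    (hg : ∀ d ∈ D, Tendsto (fun k => f k d) atTop (𝓝 (g d)))
    (hh : ∀ d ∈ D, Tendsto (fun k => (f k).symm d) atTop (𝓝 (h d)))
    (ρ : Set (AddCircle (1 : ℝ) × AddCircle (1 : ℝ)))
    (hρ : ρ = {p | (p.1 ∈ D ∧ p.2 = g p.1) ∨ (p.2 ∈ D ∧ p.1 = h p.2)}) :
    ∀ ε > (0 : ℝ), ∃ η > (0 : ℝ), ∀ p ∈ ρ, ∀ p' ∈ ρ,
      (dist p.1 p'.1 < η → dist p.2 p'.2 < ε) ∧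
      (dist p.2 p'.2 < η → dist p.1 p'.1 < ε) := by
  intro ε hε
  have hφ : Continuous φ := (QuotientAddGroup.isQuotientMap_mk _).continuous_iff.2 hφC.continuous
  have hψ : Continuous ψ := (QuotientAddGroup.isQuotientMap_mk _).continuous_iff.2 hψC.continuous
  obtain ⟨η₁, hη₁, hf⟩ := eventually_dist_lt_of_morse hφ hψ hψMorse hor happrox (half_pos hε)
  obtain ⟨η₂, hη₂, hf_symm⟩ := eventually_dist_lt_of_morse hψ hφ hφMorse
    (fun k => (hor k).elim fun _ hF => IsIncreasingLift.symm hF)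
    (happrox.congr fun k => (iSup_abs_sub_comp_symm (f k).toEquiv φ ψ).symm) (half_pos hε)
  have hρ_lim : ∀ p ∈ ρ, IsGraphLimit (fun k => f k) p ∧
      IsGraphLimit (fun k => (f k).symm) p.swap := by
    rw [hρ]
    rintro ⟨x, y⟩ (⟨hx, hy⟩ | ⟨hy, hx⟩)
    · obtain rfl : y = g x := hy
      exact ⟨isGraphLimit_of_tendsto (hg x hx), (isGraphLimit_of_tendsto (hg x hx)).symm⟩
    · obtain rfl : x = h y := hx
      exact ⟨by simpa using (isGraphLimit_of_tendsto (hh y hy)).symm,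
        isGraphLimit_of_tendsto (hh y hy)⟩
  refine ⟨min η₁ η₂, lt_min hη₁ hη₂, fun p hp p' hp' => ⟨fun hd => ?_, fun hd => ?_⟩⟩
  · exact ((hρ_lim p hp).1.dist_le hf (hρ_lim p' hp').1
      (hd.trans_le (min_le_left _ _))).trans_lt (half_lt_self hε)
  · exact ((hρ_lim p hp).2.dist_le hf_symm (hρ_lim p' hp').2
      (hd.trans_le (min_le_right _ _))).trans_lt (half_lt_self hε)

/-- Lemma `LemmaFond (i)`: uniform-continuity-type property of the relation `ρ`
built from the pointwise limits, on the rational points, of a 0-approximating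
sequence of orientation-preserving homeomorphisms of the circle. -/
theorem rho_uniform_continuity
    (φ ψ : AddCircle (1 : ℝ) → ℝ)
    (hφC : ContDiff ℝ 2 (fun t : ℝ => φ (t : AddCircle (1 : ℝ))))
    (hφMorse : ∀ t : ℝ, deriv (fun s : ℝ => φ (s : AddCircle (1 : ℝ))) t ≠ 0 ∨
      deriv (deriv (fun s : ℝ => φ (s : AddCircle (1 : ℝ)))) t ≠ 0)
    (hψC : ContDiff ℝ 2 (fun t : ℝ => ψ (t : AddCircle (1 : ℝ))))
    (hψMorse : ∀ t : ℝ, deriv (fun s : ℝ => ψ (s : AddCircle (1 : ℝ))) t ≠ 0 ∨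
      deriv (deriv (fun s : ℝ => ψ (s : AddCircle (1 : ℝ)))) t ≠ 0)
    (f : ℕ → AddCircle (1 : ℝ) ≃ₜ AddCircle (1 : ℝ))
    (hor : ∀ k : ℕ, ∃ F : ℝ → ℝ, Continuous F ∧ StrictMono F ∧
      (∀ t : ℝ, F (t + 1) = F t + 1) ∧
      ∀ t : ℝ, f k (t : AddCircle (1 : ℝ)) = ((F t : ℝ) : AddCircle (1 : ℝ)))
    (happrox : Tendsto (fun k => ⨆ x, |φ x - ψ (f k x)|) atTop (𝓝 0))
    (D : Set (AddCircle (1 : ℝ)))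
    (hD : D = Set.range (fun q : ℚ => ((q : ℝ) : AddCircle (1 : ℝ))))
    (g h : AddCircle (1 : ℝ) → AddCircle (1 : ℝ))
    (hg : ∀ d ∈ D, Tendsto (fun k => f k d) atTop (𝓝 (g d)))
    (hh : ∀ d ∈ D, Tendsto (fun k => (f k).symm d) atTop (𝓝 (h d)))
    (ρ : Set (AddCircle (1 : ℝ) × AddCircle (1 : ℝ)))
    (hρ : ρ = {p | (p.1 ∈ D ∧ p.2 = g p.1) ∨ (p.2 ∈ D ∧ p.1 = h p.2)}) :
    ∀ ε > (0 : ℝ), ∃ η > (0 : ℝ), ∀ p ∈ ρ, ∀ p' ∈ ρ,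
      (dist p.1 p'.1 < η → dist p.2 p'.2 < ε) ∧
      (dist p.2 p'.2 < η → dist p.1 p'.1 < ε) :=
  rho_uniform_continuity_general φ ψ hφC hφMorse hψC hψMorse f hor happrox D g h hg hh ρ hρ
end

section
/- Let φ, ψ : ℝ/ℤ → ℝ be Morse measuring functions on the circle. Let (f_k) be a sequence of orientation-preserving homeomorphisms of ℝ/ℤ with sup_{x ∈ ℝ/ℤ} |φ(x) − ψ(f_k(x))| → 0 as k → ∞. Let D = π(ℚ) and suppose g, h : D → ℝ/ℤ are functions such that for every d ∈ D, f_k(d) → g(d) and f_k⁻¹(d) → h(d) as k → ∞. Define ρ = {(d, g(d)) : d ∈ D} ∪ {(h(d), d) : d ∈ D} ⊆ (ℝ/ℤ) × (ℝ/ℤ). Then for all (x, y), (x′, y′) ∈ ρ, one has x = x′ if and only if y = y′. -/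
/-!
If `xs k → x` and `xs' k → x'` with `x ≠ x'`, while `f k (xs k)` and `f k (xs' k)` converge to the
same point, then, after lifting to `ℝ`, the degree-one lifts of `f k` would squeeze one of the two arcs between `x` and `x'`
to length `→ 0` along a subsequence. On that arc `φ` is the pointwise limit of `ψ ∘ f k` and `ψ` is
uniformly continuous, so `φ` would be constant there, which a Morse function cannot be. Applied to
`f k` and to `(f k)⁻¹` (exchanging `φ` and `ψ`), this gives the two implications.
-/

open Filter Topology Set

theorem not_eqOn_const_Ioo_of_deriv_or_deriv_deriv_ne_zero {A : ℝ → ℝ}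
    (hA : ∀ t, deriv A t ≠ 0 ∨ deriv (deriv A) t ≠ 0) {a b : ℝ} (hab : a < b) (c : ℝ) :
    ¬ EqOn A (fun _ => c) (Ioo a b) := by
  intro hc
  have hderiv : EqOn (deriv A) (fun _ => 0) (Ioo a b) := fun t ht => by
    rw [(hc.eventuallyEq_of_mem (isOpen_Ioo.mem_nhds ht)).deriv_eq, deriv_const]
  obtain ⟨t, ht⟩ := nonempty_Ioo.2 hab
  rcases hA t with h1 | h2
  · exact h1 (hderiv ht)
  · rw [(hderiv.eventuallyEq_of_mem (isOpen_Ioo.mem_nhds ht)).deriv_eq, deriv_const] at h2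
    exact h2 rfl

theorem eqOn_const_Icc_of_tendsto_comp_of_collapse {ι X : Type*} [MetricSpace X]
    {l : Filter ι} [l.NeBot] {A B : ℝ → X} (hB : UniformContinuous B) {E : ι → ℝ → ℝ}
    (hE : ∀ k, Monotone (E k))
    {a b : ℝ} (hcollapse : Tendsto (fun k => E k b - E k a) l (𝓝 0))
    (hconv : ∀ t ∈ Icc a b, Tendsto (fun k => B (E k t)) l (𝓝 (A t))) :
    EqOn A (fun _ => A a) (Icc a b) := by
  intro t ht
  have hEt : Tendsto (fun k => dist (E k t) (E k a)) l (𝓝 0) := by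
    refine squeeze_zero (fun _ => dist_nonneg) (fun k => ?_) hcollapse
    rw [Real.dist_eq, abs_of_nonneg (sub_nonneg.2 (hE k ht.1))]
    linarith [hE k ht.2]
  have hBE : Tendsto (fun k => dist (B (E k t)) (B (E k a))) l (𝓝 0) :=
    (tendsto_uniformity_iff_dist_tendsto_zero (f := fun k => (B (E k t), B (E k a)))).1 <|
      Tendsto.comp hB
        ((tendsto_uniformity_iff_dist_tendsto_zero (f := fun k => (E k t, E k a))).2 hEt)
  exact dist_eq_zero.1 <|
    tendsto_nhds_unique ((hconv t ht).dist (hconv a (left_mem_Icc.2 (ht.1.trans ht.2)))) hBE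

theorem AddCircle.exists_tendsto_lift {p : ℝ} [Fact (0 < p)] {ι : Type*} {l : Filter ι}
    {xs : ι → AddCircle p} {a : ℝ} (h : Tendsto xs l (𝓝 (a : AddCircle p))) :
    ∃ as : ι → ℝ, (∀ k, (as k : AddCircle p) = xs k) ∧ Tendsto as l (𝓝 a) := by
  have hp : 0 < p := Fact.out
  have ha : a ∈ Ico (a - p / 2) (a - p / 2 + p) := ⟨by linarith, by linarith⟩
  have hne : (a : AddCircle p) ≠ ((a - p / 2 : ℝ) : AddCircle p) := by
    rw [Ne, AddCircle.coe_eq_coe_iff_of_mem_Ico ha (left_mem_Ico.2 (by linarith))]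
    linarith
  refine ⟨fun k => AddCircle.equivIco p (a - p / 2) (xs k),
    fun k => (AddCircle.equivIco p (a - p / 2)).symm_apply_apply (xs k), ?_⟩
  have := (continuous_subtype_val.continuousAt.comp
    (AddCircle.continuousAt_equivIco p (a - p / 2) hne)).tendsto.comp h
  rwa [Function.comp_apply, AddCircle.equivIco_coe_eq ha] at this

theorem AddCircle.exists_lt_lt_add_of_ne {p : ℝ} [Fact (0 < p)] {x x' : AddCircle p}
    (h : x ≠ x') :
    ∃ a b : ℝ, (a : AddCircle p) = x ∧ (b : AddCircle p) = x' ∧ a < b ∧ b < a + p := by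
  obtain ⟨a, rfl⟩ := QuotientAddGroup.mk_surjective x
  set b := AddCircle.equivIco p a x'
  have hb : (b : AddCircle p) = x' := (AddCircle.equivIco p a).symm_apply_apply x'
  refine ⟨a, b, rfl, hb, lt_of_le_of_ne b.2.1 ?_, b.2.2⟩
  rintro hab
  exact h (by rw [← hb, ← hab])

theorem UnitAddCircle.norm_coe_eq_min {c : ℝ} (hc : c ∈ Icc (0 : ℝ) 1) :
    ‖(c : UnitAddCircle)‖ = min c (1 - c) := by
  rw [UnitAddCircle.norm_eq, abs_sub_round_eq_min]
  rcases hc.2.eq_or_lt with rfl | hlt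
  · simp
  · rw [Int.fract_eq_self.2 ⟨hc.1, hlt⟩]

theorem exists_lt_tendsto_sub_zero {ι : Type*} {l : Filter ι} {E : ι → ℝ → ℝ}
    (hE : ∀ k, Monotone (E k)) {as bs : ι → ℝ} {a b : ℝ} (hab : a < b)
    (has : Tendsto as l (𝓝 a)) (hbs : Tendsto bs l (𝓝 b))
    (h : Tendsto (fun k => E k (bs k) - E k (as k)) l (𝓝 0)) :
    ∃ a' b', a' < b' ∧ Tendsto (fun k => E k b' - E k a') l (𝓝 0) := by
  obtain ⟨a', haa', ha'b⟩ := exists_between hab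
  obtain ⟨b', ha'b', hb'b⟩ := exists_between ha'b
  refine ⟨a', b', ha'b', squeeze_zero' (Eventually.of_forall fun k => ?_) ?_ h⟩
  · exact sub_nonneg.2 (hE k ha'b'.le)
  · filter_upwards [has.eventually (gt_mem_nhds haa'), hbs.eventually (lt_mem_nhds hb'b)]
      with k hak hbk
    exact sub_le_sub (hE k hbk.le) (hE k hak.le)

theorem CircleDeg1Lift.exists_collapsing_interval {ι : Type*} {l : Filter ι} [l.NeBot]
    (E : ι → CircleDeg1Lift) {as bs : ι → ℝ} {a b : ℝ} (hab : a < b) (hba : b < a + 1)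
    (has : Tendsto as l (𝓝 a)) (hbs : Tendsto bs l (𝓝 b))
    (hdist : Tendsto (fun k => ‖((E k (bs k) - E k (as k) : ℝ) : UnitAddCircle)‖) l (𝓝 0)) :
    ∃ l' ≤ l, l'.NeBot ∧ ∃ a' b', a' < b' ∧ Tendsto (fun k => E k b' - E k a') l' (𝓝 0) := by
  -- `c k` is the lifted length of the arc from `as k` to `bs k`; its circle norm is
  -- `min (c k) (1 - c k)`, so either this arc or its complement collapses.
  set c := fun k => E k (bs k) - E k (as k) with hc
  have hc01 : ∀ᶠ k in l, c k ∈ Icc 0 1 := by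
    filter_upwards [has.eventually_lt hbs hab,
      hbs.eventually_lt (has.add_const 1) hba] with k hak hbk
    refine ⟨sub_nonneg.2 ((E k).mono hak.le), ?_⟩
    have := (E k).mono hbk.le
    rw [(E k).map_add_one] at this
    simp only [hc]
    linarith
  have hmin : Tendsto (fun k => min (c k) (1 - c k)) l (𝓝 0) :=
    hdist.congr' (hc01.mono fun k hk => UnitAddCircle.norm_coe_eq_min hk)
  by_cases hfreq : ∃ᶠ k in l, c k ≤ 1 / 2
  · refine ⟨l ⊓ 𝓟 {k | c k ≤ 1 / 2}, inf_le_left, frequently_iff_neBot.1 hfreq, ?_⟩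
    refine exists_lt_tendsto_sub_zero (fun k => (E k).monotone) hab (has.mono_left inf_le_left)
      (hbs.mono_left inf_le_left) ((hmin.mono_left inf_le_left).congr' ?_)
    filter_upwards [inf_le_right (a := l) (mem_principal_self _)] with k hk
    exact min_eq_left (by linarith [show c k ≤ 1 / 2 from hk])
  · refine ⟨l, le_rfl, inferInstance, ?_⟩
    refine exists_lt_tendsto_sub_zero (fun k => (E k).monotone) hba hbs (has.add_const 1)
      (hmin.congr' ?_)
    filter_upwards [not_frequently.1 hfreq] with k hk
    rw [(E k).map_add_one, min_eq_right (by linarith [not_le.1 hk])]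
    ring

theorem CircleDeg1Lift.exists_symm_lift (f : UnitAddCircle ≃ UnitAddCircle) (F : CircleDeg1Lift)
    (hFc : Continuous F) (hFm : StrictMono F) (hfF : ∀ t : ℝ, f t = F t) :
    ∃ G : CircleDeg1Lift, ∀ t : ℝ, f.symm t = G t := by
  obtain ⟨u, rfl⟩ := isUnit_iff_bijective.2 ⟨hFm.injective, (continuous_iff_surjective _).1 hFc⟩
  refine ⟨↑u⁻¹, fun t => f.symm_apply_eq.2 ?_⟩
  rw [hfF, units_apply_inv_apply]

def LimitInjective {ι X Y : Type*} [TopologicalSpace X] [TopologicalSpace Y] (l : Filter ι)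
    (e : ι → X → Y) : Prop :=
  ∀ ⦃xs xs' : ι → X⦄ ⦃x x' : X⦄ ⦃y : Y⦄, Tendsto xs l (𝓝 x) → Tendsto xs' l (𝓝 x') →
    Tendsto (fun k => e k (xs k)) l (𝓝 y) → Tendsto (fun k => e k (xs' k)) l (𝓝 y) → x = x'

theorem limitInjective_of_tendsto_comp {ι : Type*} {l : Filter ι} [l.NeBot]
    {α β : UnitAddCircle → ℝ}
    (hα : ∀ t : ℝ, deriv (fun s : ℝ => α s) t ≠ 0 ∨ deriv (deriv (fun s : ℝ => α s)) t ≠ 0)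
    (hβ : Continuous β) {e : ι → UnitAddCircle → UnitAddCircle} {E : ι → CircleDeg1Lift}
    (hE : ∀ k (t : ℝ), e k t = E k t) (hconv : ∀ x, Tendsto (fun k => β (e k x)) l (𝓝 (α x))) :
    LimitInjective l e := by
  intro xs xs' x x' y hxs hxs' hy hy'
  by_contra hne
  obtain ⟨a, b, rfl, rfl, hab, hba⟩ := AddCircle.exists_lt_lt_add_of_ne hne
  obtain ⟨as, has_coe, has⟩ := AddCircle.exists_tendsto_lift hxs
  obtain ⟨bs, hbs_coe, hbs⟩ := AddCircle.exists_tendsto_lift hxs'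
  have hdist : Tendsto (fun k => ‖((E k (bs k) - E k (as k) : ℝ) : UnitAddCircle)‖) l (𝓝 0) := by
    have := hy'.dist hy
    rw [dist_self] at this
    refine this.congr fun k => ?_
    rw [← hbs_coe, ← has_coe, hE, hE, dist_eq_norm, AddCircle.coe_sub]
  obtain ⟨l', hl', _, a', b', hab', hcollapse⟩ :=
    CircleDeg1Lift.exists_collapsing_interval E hab hba has hbs hdist
  have hβu : UniformContinuous fun t : ℝ => β t :=
    (CompactSpace.uniformContinuous_of_continuous hβ).comp
      (uniformContinuous_of_continuousAt_zero (QuotientAddGroup.mk' _)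
        continuous_quotient_mk'.continuousAt)
  have hconst := eqOn_const_Icc_of_tendsto_comp_of_collapse (A := fun t : ℝ => α t) hβu
    (fun k => (E k).monotone) hcollapse fun t _ => by
      simpa only [hE] using (hconv t).mono_left hl'
  exact not_eqOn_const_Ioo_of_deriv_or_deriv_deriv_ne_zero hα hab' _
    (hconst.mono Ioo_subset_Icc_self)

def limitGraph {X : Type*} (D : Set X) (g h : X → X) : Set (X × X) :=
  {p | (p.1 ∈ D ∧ p.2 = g p.1) ∨ (p.2 ∈ D ∧ p.1 = h p.2)}

theorem swap_mem_limitGraph {X : Type*} {D : Set X} {g h : X → X} {p : X × X} :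
    p.swap ∈ limitGraph D h g ↔ p ∈ limitGraph D g h := by
  simp only [limitGraph, mem_ofPred_eq, Prod.fst_swap, Prod.snd_swap, or_comm]

theorem limitGraph_snd_eq_of_fst_eq {ι X : Type*} [TopologicalSpace X] {l : Filter ι}
    {f : ι → X ≃ X} {D : Set X} {g h : X → X}
    (hg : ∀ d ∈ D, Tendsto (fun k => f k d) l (𝓝 (g d)))
    (hh : ∀ d ∈ D, Tendsto (fun k => (f k).symm d) l (𝓝 (h d)))
    (hinj : LimitInjective l fun k => (f k).symm) {p p' : X × X}
    (hp : p ∈ limitGraph D g h) (hp' : p' ∈ limitGraph D g h) (hfst : p.1 = p'.1) :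
    p.2 = p'.2 := by
  obtain ⟨x, y⟩ := p
  obtain ⟨x', y'⟩ := p'
  simp only [limitGraph, mem_ofPred_eq] at hp hp' hfst ⊢
  subst hfst
  rcases hp with ⟨hx, rfl⟩ | ⟨hy, rfl⟩ <;> rcases hp' with ⟨hx', rfl⟩ | ⟨hy', hxy'⟩
  · rfl
  · refine hinj (hg x hx) tendsto_const_nhds ?_ (hxy' ▸ hh y' hy')
    simpa using tendsto_const_nhds
  · refine hinj tendsto_const_nhds (hg _ hx') (hh y hy) ?_
    simpa using tendsto_const_nhds
  · exact hinj tendsto_const_nhds tendsto_const_nhds (hh y hy) (hxy' ▸ hh y' hy')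

theorem tendsto_apply_of_tendsto_iSup_abs {ι X : Type*} [TopologicalSpace X] [CompactSpace X]
    {l : Filter ι} {u : ι → X → ℝ} (hu : ∀ k, Continuous (u k))
    (h : Tendsto (fun k => ⨆ x, |u k x|) l (𝓝 0)) (xs : ι → X) :
    Tendsto (fun k => u k (xs k)) l (𝓝 0) :=
  squeeze_zero_norm (fun k => le_ciSup (isCompact_range (hu k).abs).bddAbove (xs k)) h

theorem rho_injectivity_general
    (φ ψ : AddCircle (1 : ℝ) → ℝ)
    (hφC : ContDiff ℝ 2 (fun t : ℝ => φ (t : AddCircle (1 : ℝ))))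
    (hφMorse : ∀ t : ℝ, deriv (fun s : ℝ => φ (s : AddCircle (1 : ℝ))) t ≠ 0 ∨
      deriv (deriv (fun s : ℝ => φ (s : AddCircle (1 : ℝ)))) t ≠ 0)
    (hψC : ContDiff ℝ 2 (fun t : ℝ => ψ (t : AddCircle (1 : ℝ))))
    (hψMorse : ∀ t : ℝ, deriv (fun s : ℝ => ψ (s : AddCircle (1 : ℝ))) t ≠ 0 ∨
      deriv (deriv (fun s : ℝ => ψ (s : AddCircle (1 : ℝ)))) t ≠ 0)
    (f : ℕ → AddCircle (1 : ℝ) ≃ₜ AddCircle (1 : ℝ))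
    (hor : ∀ k : ℕ, ∃ F : ℝ → ℝ, Continuous F ∧ StrictMono F ∧
      (∀ t : ℝ, F (t + 1) = F t + 1) ∧
      ∀ t : ℝ, f k (t : AddCircle (1 : ℝ)) = ((F t : ℝ) : AddCircle (1 : ℝ)))
    (happrox : Tendsto (fun k => ⨆ x, |φ x - ψ (f k x)|) atTop (𝓝 0))
    (D : Set (AddCircle (1 : ℝ)))
    (g h : AddCircle (1 : ℝ) → AddCircle (1 : ℝ))
    (hg : ∀ d ∈ D, Tendsto (fun k => f k d) atTop (𝓝 (g d)))
    (hh : ∀ d ∈ D, Tendsto (fun k => (f k).symm d) atTop (𝓝 (h d)))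
    (ρ : Set (AddCircle (1 : ℝ) × AddCircle (1 : ℝ)))
    (hρ : ρ = {p | (p.1 ∈ D ∧ p.2 = g p.1) ∨ (p.2 ∈ D ∧ p.1 = h p.2)}) :
    ∀ p ∈ ρ, ∀ p' ∈ ρ, (p.1 = p'.1 ↔ p.2 = p'.2) := by
  have hφ : Continuous φ := (QuotientAddGroup.isQuotientMap_mk _).continuous_iff.2 hφC.continuous
  have hψ : Continuous ψ := (QuotientAddGroup.isQuotientMap_mk _).continuous_iff.2 hψC.continuous
  have hsmall := tendsto_apply_of_tendsto_iSup_abs (fun k => by fun_prop) happrox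
  have hconv x : Tendsto (fun k => ψ (f k x)) atTop (𝓝 (φ x)) := by
    simpa using (tendsto_const_nhds (x := φ x)).sub (hsmall fun _ => x)
  have hconv' x : Tendsto (fun k => φ ((f k).symm x)) atTop (𝓝 (ψ x)) := by
    simpa using (hsmall fun k => (f k).symm x).add_const (ψ x)
  choose F hFc hFm hFp hFf using hor
  let E k : CircleDeg1Lift := ⟨⟨F k, (hFm k).monotone⟩, hFp k⟩
  choose G hG using fun k =>
    CircleDeg1Lift.exists_symm_lift (f k).toEquiv (E k) (hFc k) (hFm k) (hFf k)
  have hinj := limitInjective_of_tendsto_comp hφMorse hψ (E := E) hFf hconv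
  have hinj' := limitInjective_of_tendsto_comp hψMorse hφ (E := G) hG hconv'
  subst hρ
  intro p hp p' hp'
  exact ⟨limitGraph_snd_eq_of_fst_eq (f := fun k => (f k).toEquiv) hg hh hinj' hp hp',
    fun hsnd => limitGraph_snd_eq_of_fst_eq (f := fun k => (f k).toEquiv.symm) hh
      (by simpa using hg) (by simpa using hinj) (swap_mem_limitGraph.2 hp)
      (swap_mem_limitGraph.2 hp') hsnd⟩

/-- Lemma `LemmaFond (iii)`: for the relation `ρ` built from the pointwise limits,
on the rational points, of a 0-approximating
sequence of orientation-preserving homeomorphisms of the circle, one has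
`x = x'` iff `y = y'` for all `(x,y), (x',y') ∈ ρ`. -/
theorem rho_injectivity
    (φ ψ : AddCircle (1 : ℝ) → ℝ)
    (hφC : ContDiff ℝ 2 (fun t : ℝ => φ (t : AddCircle (1 : ℝ))))
    (hφMorse : ∀ t : ℝ, deriv (fun s : ℝ => φ (s : AddCircle (1 : ℝ))) t ≠ 0 ∨
      deriv (deriv (fun s : ℝ => φ (s : AddCircle (1 : ℝ)))) t ≠ 0)
    (hψC : ContDiff ℝ 2 (fun t : ℝ => ψ (t : AddCircle (1 : ℝ))))
    (hψMorse : ∀ t : ℝ, deriv (fun s : ℝ => ψ (s : AddCircle (1 : ℝ))) t ≠ 0 ∨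
      deriv (deriv (fun s : ℝ => ψ (s : AddCircle (1 : ℝ)))) t ≠ 0)
    (f : ℕ → AddCircle (1 : ℝ) ≃ₜ AddCircle (1 : ℝ))
    (hor : ∀ k : ℕ, ∃ F : ℝ → ℝ, Continuous F ∧ StrictMono F ∧
      (∀ t : ℝ, F (t + 1) = F t + 1) ∧
      ∀ t : ℝ, f k (t : AddCircle (1 : ℝ)) = ((F t : ℝ) : AddCircle (1 : ℝ)))
    (happrox : Tendsto (fun k => ⨆ x, |φ x - ψ (f k x)|) atTop (𝓝 0))
    (D : Set (AddCircle (1 : ℝ)))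
    (hD : D = Set.range (fun q : ℚ => ((q : ℝ) : AddCircle (1 : ℝ))))
    (g h : AddCircle (1 : ℝ) → AddCircle (1 : ℝ))
    (hg : ∀ d ∈ D, Tendsto (fun k => f k d) atTop (𝓝 (g d)))
    (hh : ∀ d ∈ D, Tendsto (fun k => (f k).symm d) atTop (𝓝 (h d)))
    (ρ : Set (AddCircle (1 : ℝ) × AddCircle (1 : ℝ)))
    (hρ : ρ = {p | (p.1 ∈ D ∧ p.2 = g p.1) ∨ (p.2 ∈ D ∧ p.1 = h p.2)}) :
    ∀ p ∈ ρ, ∀ p' ∈ ρ, (p.1 = p'.1 ↔ p.2 = p'.2) :=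
  rho_injectivity_general φ ψ hφC hφMorse hψC hψMorse f hor happrox D g h hg hh ρ hρ
end
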